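/- arXiv:1203.2603 — 5 statements merged into one kernel-verified Lean document; each statement's English description precedes it below -/
import Mathlib

section
/- Let T be a subdivision of the claw K_{1,3} (a star with three legs subdivided into paths of arbitrary positive lengths). Then a graph G contains T as a minor if and only if G contains T as a subgraph. -/
/-- `T` is contained in `G` as a subgraph. -/
def ContainsSubgraph {α β : Type*} (T : SimpleGraph α) (G : SimpleGraph β) : Prop :=
  ∃ f : α → β, Function.Injective f ∧ ∀ u v, T.Adj u v → G.Adj (f u) (f v)

/-- `T` is a minor of `G` (branch-set characterization). -/
def IsMinor {α β : Type*} (T : SimpleGraph α) (G : SimpleGraph β) : Prop :=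
  ∃ B : α → Set β,
    (∀ x, (B x).Nonempty) ∧
    (Pairwise fun x y => Disjoint (B x) (B y)) ∧
    (∀ x, (G.induce (B x)).Connected) ∧
    ∀ u v, T.Adj u v → ∃ a ∈ B u, ∃ b ∈ B v, G.Adj a b

/-- The star with `d` legs of lengths `ℓ 0, …, ℓ (d-1)`: a central vertex `none` with
`d` internally disjoint paths attached; `some ⟨j, i⟩` is the vertex at depth `i+1`
along the `j`-th leg. -/
def SubdividedStar (d : ℕ) (ℓ : Fin d → ℕ) :
    SimpleGraph (Option (Σ j : Fin d, Fin (ℓ j))) :=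
  SimpleGraph.fromRel (fun x y =>
    match x, y with
    | none, some ⟨_, i⟩ => i.val = 0
    | some ⟨j, i⟩, some ⟨j', i'⟩ => j.val = j'.val ∧ i'.val = i.val + 1
    | _, _ => False)

/-!
A subgraph gives a minor with singleton branch sets. Conversely, let `B` be a minor model of the
star. Each leg `j` has a vertex `a j` in the centre branch set adjacent to the first branch set of
the leg. Inside the connected centre branch set there is a tripod: a vertex `c` with walks to the
three `a j` meeting only at `c` (follow a walk from `a 2` until it first hits a path from `a 0` to
`a 1`). Continuing the `j`-th walk through the branch sets of leg `j` reaches the last of them, and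
the depth of a branch set along the leg rises by at most one per step, so the path contained in
this walk has at least `ℓ j` edges. Its first `ℓ j` vertices after `c` form the `j`-th leg of the
star; different legs meet only at `c` because they run through disjoint branch sets.
-/

open SimpleGraph

namespace SimpleGraph

variable {V : Type*} {G : SimpleGraph V}

lemma exists_walk_support_subset_of_preconnected_induce {s : Set V}
    (hs : (G.induce s).Preconnected) {a b : V} (ha : a ∈ s) (hb : b ∈ s) :
    ∃ p : G.Walk a b, ∀ x ∈ p.support, x ∈ s := by
  obtain ⟨p, hp⟩ := (Subgraph.preconnected_iff_forall_exists_walk_subgraph _).mp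
    (preconnected_induce_iff.mp hs) ha hb
  exact ⟨p, fun x hx => hp.1 (p.mem_verts_toSubgraph.mpr hx)⟩

namespace Walk

lemma le_add_length_of_forall_darts (ψ : V → ℕ) {u v : V} (p : G.Walk u v)
    (hp : ∀ e ∈ p.darts, ψ e.snd ≤ ψ e.fst + 1) : ψ v ≤ ψ u + p.length := by
  induction p with
  | nil => simp
  | cons h p ih =>
    simp only [darts_cons, List.mem_cons, forall_eq_or_imp] at hp
    have := ih hp.2
    have := hp.1
    simp only [length_cons]
    omega

lemma IsPath.eq_of_mem_support_takeUntil_of_mem_support_dropUntil [DecidableEq V] {u v w x : V}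
    {p : G.Walk u v} (hp : p.IsPath) (hw : w ∈ p.support)
    (hx : x ∈ (p.takeUntil w hw).support) (hx' : x ∈ (p.dropUntil w hw).support) : x = w := by
  have hnodup := hp.support_nodup
  rw [← p.take_spec hw, support_append] at hnodup
  rw [← cons_tail_support] at hx'
  rcases List.mem_cons.mp hx' with rfl | hx'
  · rfl
  · exact absurd hx' (List.disjoint_of_nodup_append hnodup hx)

end Walk

lemma exists_tripod [DecidableEq V] {s : Set V} (hs : (G.induce s).Preconnected) (a : Fin 3 → V)
    (ha : ∀ j, a j ∈ s) :
    ∃ c, ∃ U : Fin 3 → Set V, (∀ j, U j ⊆ s) ∧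
      (∀ j, ∃ P : G.Walk c (a j), ∀ x ∈ P.support, x ∈ U j) ∧
      ∀ j k, j ≠ k → ∀ x ∈ U j, x ∈ U k → x = c := by
  obtain ⟨W, hW⟩ := exists_walk_support_subset_of_preconnected_induce hs (ha 0) (ha 1)
  obtain ⟨Q, hQ⟩ := exists_walk_support_subset_of_preconnected_induce hs (ha 2) (ha 0)
  obtain ⟨c, hcP, hcQ, hfirst⟩ := Q.exists_mem_support_forall_mem_support_imp_eq
    W.bypass.support.toFinset ⟨a 0, by simp⟩
  have hc : c ∈ W.bypass.support := List.mem_toFinset.mp hcP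
  let P₀ := (W.bypass.takeUntil c hc).reverse
  let P₁ := W.bypass.dropUntil c hc
  let P₂ := (Q.takeUntil c hcQ).reverse
  have h₀ : ∀ x ∈ P₀.support, x ∈ W.bypass.support := fun x hx =>
    W.bypass.support_takeUntil_subset_support hc (by simpa [P₀] using hx)
  have h₁ : ∀ x ∈ P₁.support, x ∈ W.bypass.support := fun x hx =>
    W.bypass.support_dropUntil_subset_support hc hx
  have h₀₁ : ∀ x ∈ P₀.support, x ∈ P₁.support → x = c := fun x hx hx' =>
    W.bypass_isPath.eq_of_mem_support_takeUntil_of_mem_support_dropUntil hc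
      (by simpa [P₀] using hx) hx'
  have h₂ : ∀ x ∈ P₂.support, x ∈ W.bypass.support → x = c := fun x hx hx' =>
    hfirst x (List.mem_toFinset.mpr hx') (by simpa [P₂] using hx)
  have hWs : ∀ x ∈ W.bypass.support, x ∈ s := fun x hx => hW x (W.support_bypass_subset_support hx)
  refine ⟨c, ![{x | x ∈ P₀.support}, {x | x ∈ P₁.support}, {x | x ∈ P₂.support}], ?_, ?_, ?_⟩
  · intro j x hx
    fin_cases j
    · exact hWs x (h₀ x hx)
    · exact hWs x (h₁ x hx)
    · exact hQ x (Q.support_takeUntil_subset_support hcQ (by simpa [P₂] using hx))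
  · intro j
    fin_cases j
    exacts [⟨P₀, fun _ => id⟩, ⟨P₁, fun _ => id⟩, ⟨P₂, fun _ => id⟩]
  · intro j k hjk x hj hk
    fin_cases j <;> fin_cases k <;> simp at hjk hj hk
    all_goals first
      | exact h₀₁ x hj hk | exact h₀₁ x hk hj
      | exact h₂ x hk (h₀ x hj) | exact h₂ x hj (h₀ x hk)
      | exact h₂ x hk (h₁ x hj) | exact h₂ x hj (h₁ x hk)

end SimpleGraph

lemma eq_of_mem_of_pairwise_disjoint {ι α : Type*} {B : ι → Set α}
    (hB : Pairwise fun i j => Disjoint (B i) (B j)) {x : α} {i j : ι} (hi : x ∈ B i)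
    (hj : x ∈ B j) : i = j :=
  hB.eq (Set.not_disjoint_iff.mpr ⟨x, hi, hj⟩)

/-- Transports `f` from the indices of the sets `B t` to their points (`0` outside `⋃ t, B t`);
meaningful when the sets are disjoint. -/
noncomputable def liftToSets {ι α : Type*} (B : ι → Set α) (f : ι → ℕ) (x : α) : ℕ :=
  open Classical in if h : ∃ t, x ∈ B t then f h.choose else 0

lemma liftToSets_eq {ι α : Type*} {B : ι → Set α} (hB : Pairwise fun i j => Disjoint (B i) (B j))
    (f : ι → ℕ) {x : α} {t : ι} (hx : x ∈ B t) : liftToSets B f x = f t := by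
  have h : ∃ t, x ∈ B t := ⟨t, hx⟩
  rw [liftToSets, dif_pos h, eq_of_mem_of_pairwise_disjoint hB h.choose_spec hx]

theorem ContainsSubgraph.isMinor {α β : Type*} {T : SimpleGraph α} {G : SimpleGraph β}
    (h : ContainsSubgraph T G) : IsMinor T G := by
  obtain ⟨f, hinj, hadj⟩ := h
  refine ⟨fun x => {f x}, fun x => Set.singleton_nonempty _, fun x y hxy => ?_, fun x => ?_,
    fun u v huv => ⟨f u, rfl, f v, rfl, hadj u v huv⟩⟩
  · exact Set.disjoint_singleton.mpr (hinj.ne hxy)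
  · rw [induce_singleton_eq_top]
    exact connected_top

namespace SubdividedStar

variable {d : ℕ} {ℓ : Fin d → ℕ} {β : Type*} {G : SimpleGraph β}

lemma adj_center (j : Fin d) (hj : 0 < ℓ j) :
    (SubdividedStar d ℓ).Adj none (some ⟨j, ⟨0, hj⟩⟩) := by
  simp [SubdividedStar]

lemma adj_succ (j : Fin d) {i : ℕ} (hi : i + 1 < ℓ j) :
    (SubdividedStar d ℓ).Adj (some ⟨j, ⟨i, by omega⟩⟩) (some ⟨j, ⟨i + 1, hi⟩⟩) := by
  simp [SubdividedStar]

lemma map_adj (f : Option (Σ j : Fin d, Fin (ℓ j)) → β)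
    (h_center : ∀ j (hj : 0 < ℓ j), G.Adj (f none) (f (some ⟨j, ⟨0, hj⟩⟩)))
    (h_succ : ∀ j (i : ℕ) (hi : i + 1 < ℓ j),
      G.Adj (f (some ⟨j, ⟨i, by omega⟩⟩)) (f (some ⟨j, ⟨i + 1, hi⟩⟩)))
    (u v : Option (Σ j : Fin d, Fin (ℓ j))) (huv : (SubdividedStar d ℓ).Adj u v) :
    G.Adj (f u) (f v) := by
  rcases u with _ | ⟨j, i, hi⟩ <;> rcases v with _ | ⟨j', i', hi'⟩ <;> simp [SubdividedStar] at huv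
  · subst huv
    exact h_center j' hi'
  · subst huv
    exact (h_center j hi).symm
  · obtain ⟨-, ⟨hj, rfl⟩ | ⟨hj, rfl⟩⟩ := huv <;> obtain rfl := Fin.ext hj
    · exact h_succ _ i hi'
    · exact (h_succ _ i' hi).symm

theorem containsSubgraph_of_paths {c : β} {z : Fin d → β} (F : ∀ j, G.Walk c (z j))
    (hF : ∀ j, (F j).IsPath) (hlen : ∀ j, ℓ j ≤ (F j).length)
    (hmeet : ∀ j k, j ≠ k → ∀ x ∈ (F j).support, x ∈ (F k).support → x = c) :
    ContainsSubgraph (SubdividedStar d ℓ) G := by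
  have hlt : ∀ j, ∀ i < ℓ j, i < (F j).length := fun j i hi => hi.trans_le (hlen j)
  have hne : ∀ j (i : Fin (ℓ j)), (F j).getVert (i + 1) ≠ c := fun j i h =>
    absurd (((hF j).getVert_eq_start_iff (hlt j i i.2)).mp h) (by omega)
  refine ⟨fun | none => c | some ⟨j, i⟩ => (F j).getVert (i + 1), ?_,
    map_adj _ (fun j hj => ?_) (fun j i hi => ?_)⟩
  · rintro (_ | ⟨j, i⟩) (_ | ⟨k, i'⟩) h
    · rfl
    · exact absurd h.symm (hne k i')
    · exact absurd h (hne j i)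
    · dsimp only at h
      obtain rfl : j = k := by
        by_contra hjk
        exact hne j i (hmeet j k hjk _ ((F j).getVert_mem_support _)
          (h ▸ (F k).getVert_mem_support _))
      obtain rfl : i = i' :=
        Fin.ext (by simpa using (hF j).getVert_injOn (hlt j i i.2) (hlt j i' i'.2) h)
      rfl
  · simpa using (F j).adj_getVert_succ (hlt j 0 hj)
  · exact (F j).adj_getVert_succ (hlt j _ hi)

def depth : Option (Σ j : Fin d, Fin (ℓ j)) → ℕ
  | none => 0
  | some ⟨_, i⟩ => i + 1

variable {B : Option (Σ j : Fin d, Fin (ℓ j)) → Set β}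

lemma exists_walk_along_leg (hdisj : Pairwise fun x y => Disjoint (B x) (B y))
    (hconn : ∀ x, (G.induce (B x)).Preconnected)
    (hedge : ∀ u v, (SubdividedStar d ℓ).Adj u v → ∃ a ∈ B u, ∃ b ∈ B v, G.Adj a b)
    (j : Fin d) (hj : 0 < ℓ j) {a b : β} (ha : a ∈ B none) (hb : b ∈ B (some ⟨j, ⟨0, hj⟩⟩))
    (hab : G.Adj a b) (m : ℕ) (hm : m < ℓ j) :
    ∃ z ∈ B (some ⟨j, ⟨m, hm⟩⟩), ∃ W : G.Walk a z,
      (∀ x ∈ W.support, x = a ∨ ∃ i, x ∈ B (some ⟨j, i⟩)) ∧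
      ∀ e ∈ W.darts, liftToSets B depth e.snd ≤ liftToSets B depth e.fst + 1 := by
  have hψ := fun {t} {x} (hx : x ∈ B t) => liftToSets_eq hdisj depth hx
  induction m with
  | zero =>
    refine ⟨b, hb, .cons hab .nil, ?_, ?_⟩
    · simpa using .inr ⟨_, hb⟩
    · simp [hψ ha, hψ hb, depth]
  | succ m ih =>
    obtain ⟨z, hz, W, hWs, hWd⟩ := ih (by omega)
    obtain ⟨x, hx, y, hy, hxy⟩ := hedge _ _ (adj_succ j hm)
    obtain ⟨W', hW'⟩ := exists_walk_support_subset_of_preconnected_induce (hconn _) hz hx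
    refine ⟨y, hy, (W.append W').concat hxy, fun v hv => ?_, fun e he => ?_⟩
    · simp only [Walk.support_concat, List.mem_append, Walk.mem_support_append_iff,
        List.mem_singleton] at hv
      rcases hv with (hv | hv) | rfl
      · exact hWs v hv
      · exact .inr ⟨_, hW' v hv⟩
      · exact .inr ⟨_, hy⟩
    · simp only [Walk.darts_concat, List.concat_eq_append, List.mem_append, Walk.darts_append,
        List.mem_singleton] at he
      rcases he with (he | he) | rfl
      · exact hWd e he
      · rw [hψ (hW' _ (W'.dart_fst_mem_support_of_mem_darts he)),
          hψ (hW' _ (W'.dart_snd_mem_support_of_mem_darts he))]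
        omega
      · simp [hψ hx, hψ hy, depth]

lemma exists_leg [DecidableEq β] (hdisj : Pairwise fun x y => Disjoint (B x) (B y))
    (hconn : ∀ x, (G.induce (B x)).Preconnected)
    (hedge : ∀ u v, (SubdividedStar d ℓ).Adj u v → ∃ a ∈ B u, ∃ b ∈ B v, G.Adj a b)
    (j : Fin d) (hj : 0 < ℓ j) {c a b : β} (P : G.Walk c a) (hP : ∀ x ∈ P.support, x ∈ B none)
    (hb : b ∈ B (some ⟨j, ⟨0, hj⟩⟩)) (hab : G.Adj a b) :
    ∃ z, ∃ F : G.Walk c z, F.IsPath ∧ ℓ j ≤ F.length ∧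
      ∀ x ∈ F.support, x ∈ P.support ∨ ∃ i, x ∈ B (some ⟨j, i⟩) := by
  obtain ⟨z, hz, W, hWs, hWd⟩ := exists_walk_along_leg hdisj hconn hedge j hj
    (hP a P.end_mem_support) hb hab (ℓ j - 1) (by omega)
  have hψ := fun {t} {x} (hx : x ∈ B t) => liftToSets_eq hdisj depth hx
  refine ⟨z, (P.append W).bypass, Walk.bypass_isPath _, ?_, fun x hx => ?_⟩
  · have := Walk.le_add_length_of_forall_darts (liftToSets B depth) (P.append W).bypass
      fun e he => by
        rcases List.mem_append.mp (Walk.darts_append _ _ ▸ Walk.darts_bypass_subset_darts _ he)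
          with he | he
        · rw [hψ (hP _ (P.dart_fst_mem_support_of_mem_darts he)),
            hψ (hP _ (P.dart_snd_mem_support_of_mem_darts he))]
          exact Nat.le_succ _
        · exact hWd e he
    rw [hψ hz, hψ (hP c P.start_mem_support)] at this
    simp only [depth] at this
    omega
  · rcases (Walk.mem_support_append_iff P W).mp (Walk.support_bypass_subset_support _ hx)
      with hx | hx
    · exact .inl hx
    · exact (hWs x hx).imp_left fun h : x = a => h ▸ P.end_mem_support

end SubdividedStar

theorem stmt_4_general {β : Type*} (G : SimpleGraph β) (ℓ : Fin 3 → ℕ)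
    (hℓ : ∀ j, 1 ≤ ℓ j) :
    IsMinor (SubdividedStar 3 ℓ) G ↔ ContainsSubgraph (SubdividedStar 3 ℓ) G := by
  classical
  refine ⟨?_, ContainsSubgraph.isMinor⟩
  rintro ⟨B, -, hdisj, hconn, hedge⟩
  choose a ha b hb hab using fun j => hedge none _ (SubdividedStar.adj_center j (hℓ j))
  obtain ⟨c, U, hUs, hP, hU⟩ := exists_tripod (hconn none).preconnected a ha
  have hleg : ∀ j, ∃ z, ∃ F : G.Walk c z, F.IsPath ∧ ℓ j ≤ F.length ∧
      ∀ x ∈ F.support, x ∈ U j ∨ ∃ i, x ∈ B (some ⟨j, i⟩) := by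
    intro j
    obtain ⟨P, hPU⟩ := hP j
    obtain ⟨z, F, hF, hlen, hFs⟩ := SubdividedStar.exists_leg hdisj
      (fun t => (hconn t).preconnected) hedge j (hℓ j) P (fun x hx => hUs j (hPU x hx)) (hb j)
      (hab j)
    exact ⟨z, F, hF, hlen, fun x hx => (hFs x hx).imp_left (hPU x)⟩
  choose z F hF hlen hFs using hleg
  refine SubdividedStar.containsSubgraph_of_paths F hF hlen fun j k hjk x hxj hxk => ?_
  have hB {t t'} := eq_of_mem_of_pairwise_disjoint hdisj (i := t) (j := t') (x := x)
  rcases hFs j x hxj with hj | ⟨i, hi⟩ <;> rcases hFs k x hxk with hk | ⟨i', hi'⟩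
  · exact hU j k hjk x hj hk
  · exact absurd (hB (hUs j hj) hi') (by simp)
  · exact absurd (hB hi (hUs k hk)) (by simp)
  · exact absurd (hB hi hi') (by simp [hjk])

/-- For `T` a subdivision of the claw `K_{1,3}` (three legs of arbitrary
positive lengths), a graph `G` contains `T` as a minor iff it contains `T` as a subgraph. -/
theorem stmt_4 {β : Type*} [Fintype β] (G : SimpleGraph β) (ℓ : Fin 3 → ℕ)
    (hℓ : ∀ j, 1 ≤ ℓ j) :
    IsMinor (SubdividedStar 3 ℓ) G ↔ ContainsSubgraph (SubdividedStar 3 ℓ) G :=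
  stmt_4_general G ℓ hℓ
end

section
/- Let T be a graph such that for every graph G, G contains T as a minor if and only if G contains T as a subgraph. Then every connected component of T is either a path or a subdivision of the claw K_{1,3}. -/
namespace SimpleGraph

variable {V : Type*} {G : SimpleGraph V}

lemma connected_induce_of_forall_adj {s : Set V} {c : V} (hc : c ∈ s)
    (h : ∀ v ∈ s, v ≠ c → G.Adj c v) : (G.induce s).Connected := by
  rw [connected_iff_exists_forall_reachable]
  refine ⟨⟨c, hc⟩, fun ⟨v, hv⟩ => ?_⟩
  by_cases hvc : v = c
  · subst hvc; rfl
  · exact Adj.reachable (h v hv hvc)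

theorem Copy.card_filter_le_degree_le {W : Type*} [Fintype V] [Fintype W] {H : SimpleGraph W}
    [DecidableRel G.Adj] [DecidableRel H.Adj] (f : Copy G H) (k : ℕ) :
    (Finset.univ.filter fun x => k ≤ G.degree x).card ≤
      (Finset.univ.filter fun y => k ≤ H.degree y).card :=
  Finset.card_le_card_of_injOn f
    (fun x hx => by simpa using (by simpa using hx : k ≤ G.degree x).trans (f.degree_le x))
    f.injective.injOn

variable (G) in
def subdivision : SimpleGraph (V ⊕ G.edgeSet) where
  Adj
    | .inl v, .inr e | .inr e, .inl v => v ∈ (e : Sym2 V)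
    | _, _ => False
  symm := ⟨by rintro (_ | _) (_ | _) h <;> exact h⟩
  loopless := ⟨by rintro (_ | _) h <;> exact h⟩

@[simp] lemma subdivision_adj_inl_inr {v : V} {e : G.edgeSet} :
    G.subdivision.Adj (.inl v) (.inr e) ↔ v ∈ (e : Sym2 V) := .rfl

@[simp] lemma subdivision_adj_inr_inl {v : V} {e : G.edgeSet} :
    G.subdivision.Adj (.inr e) (.inl v) ↔ v ∈ (e : Sym2 V) := .rfl

@[simp] lemma not_subdivision_adj_inr_inr {e f : G.edgeSet} :
    ¬G.subdivision.Adj (.inr e) (.inr f) := id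

instance [DecidableEq V] : DecidableRel G.subdivision.Adj
  | .inl _, .inl _ | .inr _, .inr _ => instDecidableFalse
  | .inl v, .inr e | .inr e, .inl v => Sym2.Mem.decidable v e

theorem Walk.exists_isPath_of_isPath_subdivision :
    ∀ {a b : V} (q : G.subdivision.Walk (.inl a) (.inl b)), q.IsPath →
      ∃ p : G.Walk a b, p.IsPath ∧ 2 * p.length = q.length ∧
        (∀ x ∈ p.support, .inl x ∈ q.support) ∧
        ∀ e (he : e ∈ G.edgeSet), e ∈ p.edges → .inr ⟨e, he⟩ ∈ q.support
  | _, _, .nil, _ => ⟨.nil, by simp⟩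
  | a, _, .cons (v := .inr e) h₁ (.cons (v := .inl c) h₂ q), hq => by
    obtain ⟨p, hp, hlen, hsupp, hedges⟩ :=
      exists_isPath_of_isPath_subdivision q hq.of_cons.of_cons
    have hac : a ≠ c := by
      rintro rfl
      simp at hq
    have hadj : G.Adj a c := G.adj_of_mem_incidenceSet hac ⟨e.2, h₁⟩ ⟨e.2, h₂⟩
    have ha : .inl a ∉ q.support := fun h => by simp_all
    refine ⟨.cons hadj p, hp.cons fun h => ha (hsupp a h), by simp; omega, ?_, ?_⟩
    · simp only [Walk.support_cons, List.mem_cons]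
      rintro x (rfl | hx)
      · simp
      · simp [hsupp _ hx]
    · simp only [Walk.edges_cons, List.mem_cons]
      rintro f hf (rfl | hf')
      · have he : (⟨s(a, c), hf⟩ : G.edgeSet) = e :=
          Subtype.ext (Sym2.mem_and_mem_iff hac |>.mp ⟨h₁, h₂⟩).symm
        simp [he]
      · simp [hedges f hf hf']

theorem Walk.IsCycle.exists_isCycle_of_subdivision_inl {a : V}
    {c : G.subdivision.Walk (.inl a) (.inl a)} (hc : c.IsCycle) :
    ∃ p : G.Walk a a, p.IsCycle ∧ 2 * p.length = c.length := by
  match c, hc with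
  | .cons (v := .inr e) h₁ (.cons (v := .inl b) h₂ q), hc =>
    have hlen₃ := hc.three_le_length
    rw [Walk.cons_isCycle_iff] at hc
    obtain ⟨p, hp, hlen, -, hedges⟩ := q.exists_isPath_of_isPath_subdivision hc.1.of_cons
    have hab : a ≠ b := by
      rintro rfl
      have := (Walk.isPath_iff_nil.mp hc.1.of_cons).length_eq_zero
      simp at hlen₃
      omega
    have hadj : G.Adj a b := G.adj_of_mem_incidenceSet hab ⟨e.2, h₁⟩ ⟨e.2, h₂⟩
    refine ⟨.cons hadj p, (Walk.cons_isCycle_iff p hadj).2 ⟨hp, fun h => ?_⟩,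
      by simp; omega⟩
    have he : (⟨s(a, b), p.edges_subset_edgeSet h⟩ : G.edgeSet) = e :=
      Subtype.ext (Sym2.mem_and_mem_iff hab |>.mp ⟨h₁, h₂⟩).symm
    exact ((Walk.cons_isPath_iff _ _).mp hc.1).2 (he ▸ hedges _ _ h)

theorem Walk.IsCycle.exists_isCycle_of_subdivision {x : V ⊕ G.edgeSet}
    {c : G.subdivision.Walk x x} (hc : c.IsCycle) :
    ∃ a, ∃ p : G.Walk a a, p.IsCycle ∧ 2 * p.length = c.length := by
  classical
  match x, c, hc with
  | .inl a, c, hc => exact ⟨a, hc.exists_isCycle_of_subdivision_inl⟩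
  | .inr _, .cons (v := .inl a) h q, hc =>
    have ha : .inl a ∈ (Walk.cons h q).support := by simp
    rw [← Walk.length_rotate _ _ ha]
    exact ⟨a, (hc.rotate ha).exists_isCycle_of_subdivision_inl⟩

theorem isAcyclic_of_isContained_subdivision (h : G ⊑ G.subdivision) : G.IsAcyclic := by
  obtain ⟨f⟩ := h
  intro u c hc
  induction hn : c.length using Nat.strong_induction_on generalizing u with
  | _ n ih =>
    obtain ⟨a, p, hp, hlen⟩ := (hc.map f.injective).exists_isCycle_of_subdivision
    have := hc.three_le_length
    exact ih p.length (by simp at hlen; omega) p hp rfl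

theorem isMinor_subdivision : IsMinor G G.subdivision := by
  refine ⟨fun v => insert (.inl v) (.inr '' {e : G.edgeSet | (e : Sym2 V).out.1 = v}),
    fun v => ⟨_, Set.mem_insert _ _⟩, fun v w hvw => ?_, fun v => ?_, fun v w hvw => ?_⟩
  · simp only [Set.disjoint_left]
    rintro _ (rfl | ⟨e, rfl, rfl⟩) <;> simp_all
  · refine connected_induce_of_forall_adj (Set.mem_insert _ _) ?_
    rintro _ (rfl | ⟨e, rfl, rfl⟩) hne
    · exact (hne rfl).elim
    · exact Sym2.out_fst_mem _
  · set e : G.edgeSet := ⟨s(v, w), hvw⟩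
    rcases Sym2.mem_iff.mp (Sym2.out_fst_mem (e : Sym2 V)) with h | h
    · exact ⟨.inr e, .inr ⟨e, h, rfl⟩, .inl w, Set.mem_insert _ _, by simp [e]⟩
    · exact ⟨.inl v, Set.mem_insert _ _, .inr e, .inr ⟨e, h, rfl⟩, by simp [e]⟩

section

variable [Fintype V] [DecidableEq V] [DecidableRel G.Adj]

def subdivisionNeighborSetEquiv (v : V) :
    G.subdivision.neighborSet (.inl v) ≃ G.incidenceSet v where
  toFun
    | ⟨.inr e, h⟩ => ⟨e.1, e.2, h⟩
  invFun e := ⟨.inr ⟨e.1, e.2.1⟩, e.2.2⟩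
  left_inv := by rintro ⟨_ | _, h⟩ <;> first | rfl | exact h.elim
  right_inv _ := rfl

lemma degree_subdivision_inl (v : V) : G.subdivision.degree (.inl v) = G.degree v := by
  rw [← card_neighborSet_eq_degree, ← card_incidenceSet_eq_degree,
    Fintype.card_congr (subdivisionNeighborSetEquiv v)]

lemma degree_subdivision_inr (e : G.edgeSet) : G.subdivision.degree (.inr e) = 2 := by
  obtain ⟨e, he⟩ := e
  induction e using Sym2.ind with | _ a b =>
  have hnbr : G.subdivision.neighborFinset (.inr ⟨s(a, b), he⟩) = {.inl a, .inl b} := by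
    ext (x | x) <;> simp
  rw [← card_neighborFinset_eq_degree, hnbr, Finset.card_pair (by simpa using G.ne_of_adj he)]

theorem eq_of_reachable_of_isContained_subdivision (h : G ⊑ G.subdivision) {u w : V}
    (huw : G.Reachable u w) (hu : 3 ≤ G.degree u) (hw : 3 ≤ G.degree w) : u = w := by
  obtain ⟨f⟩ := h
  have hf : ∀ x, 3 ≤ G.degree x → ∃ y, f x = .inl y ∧ 3 ≤ G.degree y := by
    intro x hx
    have := hx.trans (f.degree_le x)
    cases hfx : f x with
    | inl y => exact ⟨y, rfl, by rwa [hfx, degree_subdivision_inl] at this⟩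
    | inr e => rw [hfx, degree_subdivision_inr] at this; omega
  obtain ⟨W⟩ := huw
  induction hW : W.length using Nat.strong_induction_on generalizing u w with
  | _ n ih =>
    by_contra huw
    obtain ⟨x, hx, hx3⟩ := hf u hu
    obtain ⟨y, hy, hy3⟩ := hf w hw
    have hxy : x ≠ y := fun hxy => huw (f.injective (by simp [hx, hy, hxy]))
    have hn : n ≠ 0 := fun h => huw (W.eq_of_length_eq_zero (hW.trans h))
    set q := (W.map f.toHom).copy hx hy
    have hq : q.bypass.length ≤ n := (Walk.length_bypass_le_length q).trans (by simp [q, hW])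
    obtain ⟨p, -, hp, -⟩ := q.bypass.exists_isPath_of_isPath_subdivision (Walk.bypass_isPath _)
    exact hxy (ih p.length (by omega) hx3 hy3 p rfl)

end

variable (G) in
def splitVertex (v : V) (N : Finset V) : SimpleGraph (Option V) where
  Adj
    | some a, some b => G.Adj a b ∧ ¬(a = v ∧ b ∈ N) ∧ ¬(b = v ∧ a ∈ N)
    | some a, none | none, some a => a = v ∨ a ∈ N
    | none, none => False
  symm := ⟨by
    rintro (_ | a) (_ | b) h
    exacts [h, h, h, ⟨h.1.symm, h.2.2, h.2.1⟩]⟩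
  loopless := ⟨by rintro (_ | a) h; exacts [h, G.loopless.irrefl a h.1]⟩

section

variable {v : V} {N : Finset V}

@[simp] lemma splitVertex_adj_some_some {a b : V} :
    (G.splitVertex v N).Adj (some a) (some b) ↔
      G.Adj a b ∧ ¬(a = v ∧ b ∈ N) ∧ ¬(b = v ∧ a ∈ N) := .rfl

@[simp] lemma splitVertex_adj_some_none {a : V} :
    (G.splitVertex v N).Adj (some a) none ↔ a = v ∨ a ∈ N := .rfl

@[simp] lemma splitVertex_adj_none_some {a : V} :
    (G.splitVertex v N).Adj none (some a) ↔ a = v ∨ a ∈ N := .rfl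

instance [DecidableEq V] [DecidableRel G.Adj] : DecidableRel (G.splitVertex v N).Adj
  | some a, some b =>
    inferInstanceAs (Decidable (G.Adj a b ∧ ¬(a = v ∧ b ∈ N) ∧ ¬(b = v ∧ a ∈ N)))
  | some a, none | none, some a => inferInstanceAs (Decidable (a = v ∨ a ∈ N))
  | none, none => instDecidableFalse

theorem isMinor_splitVertex : IsMinor G (G.splitVertex v N) := by
  refine ⟨fun x => {o | o = some x ∨ (x = v ∧ o = none)}, fun x => ⟨some x, .inl rfl⟩,
    fun x y hxy => ?_, fun x => ?_, fun a b hab => ?_⟩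
  · simp only [Set.disjoint_left]
    rintro _ (rfl | ⟨rfl, rfl⟩) <;> simp_all [eq_comm]
  · refine connected_induce_of_forall_adj (.inl rfl) ?_
    rintro _ (rfl | ⟨rfl, rfl⟩) hne
    · exact (hne rfl).elim
    · simp
  · by_cases hav : a = v ∧ b ∈ N
    · exact ⟨none, .inr ⟨hav.1, rfl⟩, some b, .inl rfl, by simp [hav.2]⟩
    by_cases hbv : b = v ∧ a ∈ N
    · exact ⟨some a, .inl rfl, none, .inr ⟨hbv.1, rfl⟩, by simp [hbv.2]⟩
    exact ⟨some a, .inl rfl, some b, .inl rfl, hab, hav, hbv⟩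

section

variable [Fintype V] [DecidableEq V] [DecidableRel G.Adj]

lemma degree_splitVertex_none_le : (G.splitVertex v N).degree none ≤ N.card + 1 := by
  have : (G.splitVertex v N).neighborFinset none ⊆ insert (some v) (N.map .some) := by
    rintro (_ | a) h <;> simp_all
  simpa using (Finset.card_le_card this).trans (Finset.card_insert_le _ _)

lemma degree_splitVertex_some_self_le (hN : N ⊆ G.neighborFinset v) :
    (G.splitVertex v N).degree (some v) ≤ G.degree v - N.card + 1 := by
  have : (G.splitVertex v N).neighborFinset (some v) ⊆
      insert none ((G.neighborFinset v \ N).map .some) := by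
    rintro (_ | a) h <;> simp_all
  have := (Finset.card_le_card this).trans (Finset.card_insert_le _ _)
  rwa [Finset.card_map, Finset.card_sdiff_of_subset hN, card_neighborFinset_eq_degree] at this

lemma degree_splitVertex_some_le (hN : N ⊆ G.neighborFinset v) {x : V} (hx : x ≠ v) :
    (G.splitVertex v N).degree (some x) ≤ G.degree x := by
  rw [← card_neighborFinset_eq_degree, ← card_neighborFinset_eq_degree]
  refine Finset.card_le_card_of_injOn (fun o => o.getD v) ?_ ?_
  · rintro (_ | a) h
    · have := hN (by simpa [hx] using h)
      simp_all [adj_comm]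
    · simp_all
  · rintro (_ | a) ha (_ | b) hb hab <;> simp_all

theorem not_isContained_splitVertex (hN : N ⊆ G.neighborFinset v) (hN₂ : 2 ≤ N.card)
    (hdeg : N.card + 2 ≤ G.degree v) : ¬G ⊑ G.splitVertex v N := by
  rintro ⟨f⟩
  have hmono := f.card_filter_le_degree_le (G.degree v)
  set k := G.degree v
  set S := Finset.univ.filter fun x => k ≤ G.degree x
  have hsub : Finset.univ.filter (fun y => k ≤ (G.splitVertex v N).degree y) ⊆
      (S.erase v).map .some := by
    rintro (_ | x) hx <;> simp only [Finset.mem_filter, Finset.mem_univ, true_and] at hx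
    · have := degree_splitVertex_none_le (G := G) (v := v) (N := N)
      omega
    · have hxv : x ≠ v := by
        rintro rfl
        have := degree_splitVertex_some_self_le hN
        omega
      simpa [S, hxv] using hx.trans (degree_splitVertex_some_le hN hxv)
  have := hmono.trans (Finset.card_le_card hsub)
  rw [Finset.card_map, Finset.card_erase_of_mem (by simp [S, k])] at this
  have : 0 < S.card := Finset.card_pos.2 ⟨v, by simp [S, k]⟩
  omega

end

end

end SimpleGraph

open SimpleGraph

lemma ContainsSubgraph.isContained {α β : Type*} {T : SimpleGraph α} {G : SimpleGraph β}
    (h : ContainsSubgraph T G) : T ⊑ G :=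
  let ⟨f, hf, hadj⟩ := h
  ⟨⟨⟨f, hadj _ _⟩, hf⟩⟩

theorem stmt_5_general {α : Type} [Fintype α] (T : SimpleGraph α)
    [DecidableRel T.Adj]
    (h : ∀ (β : Type) [Fintype β] (G : SimpleGraph β),
      IsMinor T G ↔ ContainsSubgraph T G) :
    T.IsAcyclic ∧
      ∀ c : T.ConnectedComponent,
        (∀ v ∈ c.supp, T.degree v ≤ 2) ∨
        (∃ v ∈ c.supp, T.degree v = 3 ∧ ∀ u ∈ c.supp, u ≠ v → T.degree u ≤ 2) := by
  classical
  have hsub : T ⊑ T.subdivision := ((h _ _).mp isMinor_subdivision).isContained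
  have hdeg (v : α) : T.degree v ≤ 3 := by
    by_contra! hv
    obtain ⟨N, hN, hN₂⟩ := Finset.exists_subset_card_eq (s := T.neighborFinset v) (n := 2)
      (by rw [card_neighborFinset_eq_degree]; omega)
    exact not_isContained_splitVertex hN hN₂.ge (by omega)
      ((h _ _).mp isMinor_splitVertex).isContained
  refine ⟨isAcyclic_of_isContained_subdivision hsub,
    fun c => or_iff_not_imp_left.2 fun hc => ?_⟩
  obtain ⟨v, hv, hv₃⟩ : ∃ v ∈ c.supp, 2 < T.degree v := by simpa using hc
  refine ⟨v, hv, by have := hdeg v; omega, fun u hu huv => ?_⟩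
  by_contra! hu₃
  exact huv <|
    eq_of_reachable_of_isContained_subdivision hsub (c.reachable_of_mem_supp hu hv) hu₃ hv₃

/-- If `T` is a finite graph such that every graph contains `T` as a minor
iff it contains `T` as a subgraph, then `T` is a forest each of whose connected
components is either a path (all degrees at most `2`) or a subdivided claw (exactly one
vertex of degree `3`, all other vertices of degree at most `2`). -/
theorem stmt_5 {α : Type} [Fintype α] [DecidableEq α] (T : SimpleGraph α)
    [DecidableRel T.Adj]
    (h : ∀ (β : Type) [Fintype β] (G : SimpleGraph β),
      IsMinor T G ↔ ContainsSubgraph T G) :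
    T.IsAcyclic ∧
      ∀ c : T.ConnectedComponent,
        (∀ v ∈ c.supp, T.degree v ≤ 2) ∨
        (∃ v ∈ c.supp, T.degree v = 3 ∧ ∀ u ∈ c.supp, u ≠ v → T.degree u ≤ 2) :=
  stmt_5_general T h
end

section
/- Let A and B be matrices with orthonormal columns in ℂ^n, let Π_A = AA†, Π_B = BB†, R_A = 2Π_A − I, R_B = 2Π_B − I, and U = R_B R_A. Then the +1 eigenspace of U is (range(A) ∩ range(B)) ⊕ (range(A)^⊥ ∩ range(B)^⊥), and the −1 eigenspace of U is (range(A) ∩ range(B)^⊥) ⊕ (range(A)^⊥ ∩ range(B)). -/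
/-!
`U x = x` means `R_A x = R_B x`, i.e. `Π_A x = Π_B x`; a vector whose two projections agree is
the sum of that common projection, which lies in `ran A ⊓ ran B`, and of the remainder, which lies
in both orthogonal complements. Since the reflection in `ran Bᗮ` is `-R_B`, the `-1` eigenspace
is the `+1` eigenspace for the pair `ran A`, `ran Bᗮ`.
-/

open Matrix

namespace Submodule

variable {𝕜 E : Type*} [RCLike 𝕜] [NormedAddCommGroup E] [InnerProductSpace 𝕜 E]
  {K L : Submodule 𝕜 E} [K.HasOrthogonalProjection] [L.HasOrthogonalProjection]

theorem starProjection_eq_starProjection_iff (x : E) :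
    K.starProjection x = L.starProjection x ↔ x ∈ (K ⊓ L) ⊔ (Kᗮ ⊓ Lᗮ) := by
  constructor
  · intro h
    refine mem_sup.mpr ⟨K.starProjection x, ⟨starProjection_apply_mem K x, ?_⟩,
      x - K.starProjection x, ⟨sub_starProjection_mem_orthogonal x, ?_⟩, add_sub_cancel _ _⟩
    · rw [h]; exact starProjection_apply_mem L x
    · rw [h]; exact sub_starProjection_mem_orthogonal x
  · intro h
    obtain ⟨a, ⟨haK, haL⟩, b, ⟨hbK, hbL⟩, rfl⟩ := mem_sup.mp h
    simp only [map_add, starProjection_eq_self_iff.mpr haK, starProjection_eq_self_iff.mpr haL,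
      (starProjection_apply_eq_zero_iff _).mpr hbK, (starProjection_apply_eq_zero_iff _).mpr hbL]

theorem reflection_eq_reflection_iff (x : E) :
    K.reflection x = L.reflection x ↔ K.starProjection x = L.starProjection x := by
  rw [reflection_apply, reflection_apply, sub_left_inj, two_smul ℕ, two_smul ℕ, ← two_smul 𝕜,
    ← two_smul 𝕜 (L.starProjection x)]
  exact (smul_right_injective E two_ne_zero).eq_iff

theorem reflection_reflection_eq_self_iff (x : E) :
    L.reflection (K.reflection x) = x ↔ x ∈ (K ⊓ L) ⊔ (Kᗮ ⊓ Lᗮ) := by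
  rw [← starProjection_eq_starProjection_iff, ← reflection_eq_reflection_iff,
    ← L.reflection.symm_apply_eq, reflection_symm, eq_comm]

theorem reflection_reflection_eq_neg_iff (x : E) :
    L.reflection (K.reflection x) = -x ↔ x ∈ (K ⊓ Lᗮ) ⊔ (Kᗮ ⊓ L) := by
  rw [← neg_eq_iff_eq_neg, ← reflection_orthogonal_apply, reflection_reflection_eq_self_iff,
    orthogonal_orthogonal]

end Submodule

theorem LinearMap.apply_adjoint_apply_eq_starProjection {𝕜 E F : Type*} [RCLike 𝕜]
    [NormedAddCommGroup E] [InnerProductSpace 𝕜 E] [FiniteDimensional 𝕜 E]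
    [NormedAddCommGroup F] [InnerProductSpace 𝕜 F] [FiniteDimensional 𝕜 F]
    (T : F →ₗ[𝕜] E) (hT : T.adjoint ∘ₗ T = LinearMap.id) (x : E) :
    T (T.adjoint x) = T.range.starProjection x := by
  refine (Submodule.eq_starProjection_of_mem_of_inner_eq_zero (mem_range_self T _) ?_).symm
  rintro _ ⟨z, rfl⟩
  have hTT : T.adjoint (T (T.adjoint x)) = T.adjoint x := congr($hT (T.adjoint x))
  rw [← LinearMap.adjoint_inner_left, map_sub, hTT, sub_self, inner_zero_left]

section

variable {𝕜 m n : Type*} [RCLike 𝕜] [Fintype m] [DecidableEq m] [Fintype n] [DecidableEq n]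

theorem Matrix.toEuclideanLin_mul_conjTranspose_apply (A : Matrix m n 𝕜) (hA : Aᴴ * A = 1)
    (x : EuclideanSpace 𝕜 m) :
    toEuclideanLin (A * Aᴴ) x = (LinearMap.range (toEuclideanLin A)).starProjection x := by
  have hA' : (toEuclideanLin A).adjoint ∘ₗ toEuclideanLin A = LinearMap.id := by
    rw [← toEuclideanLin_conjTranspose_eq_adjoint, ← toLpLin_mul_same, hA, toLpLin_one]
  rw [toLpLin_mul_same, LinearMap.comp_apply, toEuclideanLin_conjTranspose_eq_adjoint]
  exact (toEuclideanLin A).apply_adjoint_apply_eq_starProjection hA' x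

theorem Matrix.toEuclideanLin_two_smul_mul_conjTranspose_sub_one_apply (A : Matrix m n 𝕜)
    (hA : Aᴴ * A = 1) (x : EuclideanSpace 𝕜 m) :
    toEuclideanLin ((2 : 𝕜) • (A * Aᴴ) - 1) x
      = (LinearMap.range (toEuclideanLin A)).reflection x := by
  rw [map_sub, map_smul, toLpLin_one, LinearMap.sub_apply, LinearMap.smul_apply,
    toEuclideanLin_mul_conjTranspose_apply A hA, Submodule.reflection_apply, two_smul 𝕜, two_smul ℕ,
    LinearMap.id_apply]

end

/-- Spectral Lemma, ±1 eigenspaces: For `A`, `B` with orthonormal columns,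
`U = (2BBᴴ − I)(2AAᴴ − I)` has `+1` eigenspace `(ran A ⊓ ran B) ⊔ (ran Aᗮ ⊓ ran Bᗮ)` and
`−1` eigenspace `(ran A ⊓ ran Bᗮ) ⊔ (ran Aᗮ ⊓ ran B)`. -/
theorem stmt_9 {n k m : ℕ} (A : Matrix (Fin n) (Fin k) ℂ) (B : Matrix (Fin n) (Fin m) ℂ)
    (hA : Aᴴ * A = 1) (hB : Bᴴ * B = 1) :
    (Module.End.eigenspace
        (Matrix.toEuclideanLin
          (((2 : ℂ) • (B * Bᴴ) - 1) * ((2 : ℂ) • (A * Aᴴ) - 1))) 1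
      = (LinearMap.range (Matrix.toEuclideanLin A) ⊓
            LinearMap.range (Matrix.toEuclideanLin B)) ⊔
        ((LinearMap.range (Matrix.toEuclideanLin A))ᗮ ⊓
            (LinearMap.range (Matrix.toEuclideanLin B))ᗮ)) ∧
    (Module.End.eigenspace
        (Matrix.toEuclideanLin
          (((2 : ℂ) • (B * Bᴴ) - 1) * ((2 : ℂ) • (A * Aᴴ) - 1))) (-1)
      = (LinearMap.range (Matrix.toEuclideanLin A) ⊓
            (LinearMap.range (Matrix.toEuclideanLin B))ᗮ) ⊔
        ((LinearMap.range (Matrix.toEuclideanLin A))ᗮ ⊓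
            LinearMap.range (Matrix.toEuclideanLin B))) := by
  have hU (x : EuclideanSpace ℂ (Fin n)) :
      toEuclideanLin (((2 : ℂ) • (B * Bᴴ) - 1) * ((2 : ℂ) • (A * Aᴴ) - 1)) x
        = (LinearMap.range (toEuclideanLin B)).reflection
            ((LinearMap.range (toEuclideanLin A)).reflection x) := by
    rw [toLpLin_mul_same, LinearMap.comp_apply,
      toEuclideanLin_two_smul_mul_conjTranspose_sub_one_apply A hA,
      toEuclideanLin_two_smul_mul_conjTranspose_sub_one_apply B hB]
  constructor <;> ext x
  · rw [Module.End.mem_eigenspace_iff, hU, one_smul, Submodule.reflection_reflection_eq_self_iff]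
  · rw [Module.End.mem_eigenspace_iff, hU, neg_one_smul, Submodule.reflection_reflection_eq_neg_iff]
end

section
/- (Effective Spectral Gap Lemma) Let A and B be matrices with orthonormal columns in ℂ^n, Π_B = BB†, R_A = 2AA† − I, R_B = 2BB† − I, and U = R_B R_A. For Θ ≥ 0, let P_Θ be the orthogonal projection onto the span of all eigenvectors of U with eigenvalue e^{iθ} satisfying |θ| ≤ Θ. Then for every vector u orthogonal to the column space of A, ‖P_Θ Π_B u‖ ≤ (Θ/2)·‖u‖. -/
/-!
As `u ⊥ range A`, `R_A u = -u`, hence `2 Π_B u = u - U u`. Writing `y = P_Θ (u - U u)`,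
`‖y‖² = re ⟪y - U† y, u⟫ ≤ ‖y - U y‖ ‖u‖`, so it suffices that `U` moves every vector of the range
of `P_Θ` by at most `Θ` times its length. On that range `re ⟪(U + U†) x, x⟫ ≥ (2 - Θ²) ‖x‖²`,
because the self-adjoint `U + U†` acts on the eigenvectors of `e^{iθ}` as `2 cos θ ≥ 2 - θ²`; and
`‖x - U x‖² = 2 ‖x‖² - re ⟪(U + U†) x, x⟫` for unitary `U`.
-/

open Matrix
open Module.End (eigenspace)
open RCLike
open scoped InnerProductSpace

section Rayleigh

variable {𝕜 E : Type*} [RCLike 𝕜] [NormedAddCommGroup E] [InnerProductSpace 𝕜 E] {T : E →ₗ[𝕜] E}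

theorem LinearMap.IsSymmetric.inner_eq_zero_of_mem_iSup_eigenspace (hT : T.IsSymmetric)
    {c ν : ℝ} (hν : ν < c) {x v : E} (hx : x ∈ ⨆ μ ∈ Set.Ici c, eigenspace T (μ : 𝕜))
    (hv : v ∈ eigenspace T (ν : 𝕜)) : ⟪v, x⟫_𝕜 = 0 := by
  suffices (⨆ μ ∈ Set.Ici c, eigenspace T (μ : 𝕜)) ≤ (eigenspace T (ν : 𝕜))ᗮ from
    (Submodule.mem_orthogonal _ x).mp (this hx) v hv
  refine iSup₂_le fun μ hμ => Submodule.isOrtho_iff_le.mp ?_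
  exact hT.orthogonalFamily_eigenspaces.isOrtho (by exact_mod_cast (hν.trans_le hμ).ne')

theorem LinearMap.IsSymmetric.mul_norm_sq_le_re_inner_of_mem_iSup_eigenspace
    [FiniteDimensional 𝕜 E] (hT : T.IsSymmetric) {c : ℝ} {x : E}
    (hx : x ∈ ⨆ μ ∈ Set.Ici c, eigenspace T (μ : 𝕜)) :
    c * ‖x‖ ^ 2 ≤ re ⟪T x, x⟫_𝕜 := by
  let b := hT.eigenvectorBasis rfl
  let μ := hT.eigenvalues rfl
  have hcoord : ∀ i, ⟪T x, b i⟫_𝕜 * ⟪b i, x⟫_𝕜 = (μ i * ‖⟪b i, x⟫_𝕜‖ ^ 2 : ℝ) := by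
    intro i
    rw [hT, hT.apply_eigenvectorBasis, inner_smul_right, ← inner_conj_symm, mul_assoc,
      RCLike.conj_mul]
    push_cast; rfl
  have hsum : re ⟪T x, x⟫_𝕜 = ∑ i, μ i * ‖⟪b i, x⟫_𝕜‖ ^ 2 := by
    rw [← b.sum_inner_mul_inner, Finset.sum_congr rfl fun i _ => hcoord i, ← ofReal_sum,
      ofReal_re]
  rw [hsum, ← b.sum_sq_norm_inner_right, Finset.mul_sum]
  refine Finset.sum_le_sum fun i _ => ?_
  rcases le_or_gt c (μ i) with hμ | hμ
  · gcongr
  · have hbi : b i ∈ eigenspace T (μ i : 𝕜) :=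
      Module.End.mem_eigenspace_iff.mpr (hT.apply_eigenvectorBasis rfl i)
    simp [hT.inner_eq_zero_of_mem_iSup_eigenspace hμ hx hbi]

end Rayleigh

theorem ContinuousLinearMap.norm_starProjection_sub_apply_le {𝕜 E : Type*} [RCLike 𝕜]
    [NormedAddCommGroup E] [InnerProductSpace 𝕜 E] [CompleteSpace E] {V : E →L[𝕜] E}
    (hV : V ∈ unitary (E →L[𝕜] E)) (S : Submodule 𝕜 E) [S.HasOrthogonalProjection] {Θ : ℝ}
    (hΘ : 0 ≤ Θ) (hS : ∀ x ∈ S, ‖x - V x‖ ≤ Θ * ‖x‖) (u : E) :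
    ‖S.starProjection (u - V u)‖ ≤ Θ * ‖u‖ := by
  set y := S.starProjection (u - V u)
  have hnorm : ‖y - star V y‖ = ‖y - V y‖ := by
    rw [← norm_map_of_mem_unitary hV, map_sub, ← mul_apply_eq_comp V (star V) y,
      Unitary.mul_star_self_of_mem hV, one_apply_eq_self, norm_sub_rev]
  have hy : ‖y‖ ^ 2 ≤ Θ * ‖u‖ * ‖y‖ := calc
    ‖y‖ ^ 2 = re ⟪y, u - V u⟫_𝕜 := (S.re_inner_starProjection_eq_normSq _).symm
    _ = re ⟪y - star V y, u⟫_𝕜 := by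
      rw [inner_sub_right, inner_sub_left, star_eq_adjoint, adjoint_inner_left]
    _ ≤ ‖y - star V y‖ * ‖u‖ := re_inner_le_norm _ _
    _ = ‖y - V y‖ * ‖u‖ := by rw [hnorm]
    _ ≤ Θ * ‖y‖ * ‖u‖ := by gcongr; exact hS y (S.starProjection_apply_mem _)
    _ = Θ * ‖u‖ * ‖y‖ := by ring
  nlinarith [norm_nonneg y, mul_nonneg hΘ (norm_nonneg u)]

section Unitary

variable {E : Type*} [NormedAddCommGroup E] [InnerProductSpace ℂ E] [CompleteSpace E]
  {V : E →L[ℂ] E}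

theorem ContinuousLinearMap.star_apply_of_mem_eigenspace (hV : V ∈ unitary (E →L[ℂ] E))
    {μ : ℂ} {v : E} (hv : v ∈ eigenspace (V : E →ₗ[ℂ] E) μ) : star V v = μ⁻¹ • v := by
  rw [Module.End.mem_eigenspace_iff, ContinuousLinearMap.coe_coe] at hv
  have hvV : v = μ • star V v := by
    have h := congr($(Unitary.star_mul_self_of_mem hV) v)
    rwa [mul_apply_eq_comp, one_apply_eq_self, hv, map_smul, eq_comm] at h
  rcases eq_or_ne μ 0 with rfl | hμ
  · rw [zero_smul] at hvV
    rw [hvV, map_zero, smul_zero]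
  · rw [eq_comm, inv_smul_eq_iff₀ hμ]
    exact hvV

theorem ContinuousLinearMap.eigenspace_exp_le_eigenspace_add_star
    (hV : V ∈ unitary (E →L[ℂ] E)) (θ : ℝ) :
    eigenspace (V : E →ₗ[ℂ] E) (Complex.exp (θ * Complex.I))
      ≤ eigenspace ((V + star V : E →L[ℂ] E) : E →ₗ[ℂ] E) (2 * Real.cos θ : ℝ) := by
  intro v hv
  rw [Module.End.mem_eigenspace_iff]
  have hVv := Module.End.mem_eigenspace_iff.mp hv
  rw [ContinuousLinearMap.coe_coe] at hVv
  rw [ContinuousLinearMap.coe_coe, _root_.add_apply, hVv,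
    star_apply_of_mem_eigenspace hV hv, ← add_smul, ← Complex.exp_neg, ← neg_mul]
  push_cast
  rw [Complex.two_cos]

theorem ContinuousLinearMap.norm_sub_apply_le_of_mem_iSup_eigenspace [FiniteDimensional ℂ E]
    (hV : V ∈ unitary (E →L[ℂ] E)) {Θ : ℝ} (hΘ : 0 ≤ Θ) {x : E}
    (hx : x ∈ ⨆ θ ∈ {θ : ℝ | |θ| ≤ Θ},
      eigenspace (V : E →ₗ[ℂ] E) (Complex.exp (θ * Complex.I))) :
    ‖x - V x‖ ≤ Θ * ‖x‖ := by
  have hK := (IsSelfAdjoint.add_star_self V).isSymmetric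
  have hxK : x ∈ ⨆ μ ∈ Set.Ici (2 - Θ ^ 2 : ℝ),
      eigenspace ((V + star V : E →L[ℂ] E) : E →ₗ[ℂ] E) (μ : ℂ) := by
    refine SetLike.le_def.mp (iSup₂_le fun θ hθ => ?_) hx
    refine (eigenspace_exp_le_eigenspace_add_star hV θ).trans (le_iSup₂_of_le _ ?_ le_rfl)
    have hθΘ : θ ^ 2 ≤ Θ ^ 2 := sq_le_sq' (abs_le.mp hθ).1 (abs_le.mp hθ).2
    have := Real.one_sub_sq_div_two_le_cos (x := θ)
    simp only [Set.mem_Ici]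
    linarith
  have hre : re ⟪((V + star V : E →L[ℂ] E) : E →ₗ[ℂ] E) x, x⟫_ℂ = 2 * re ⟪x, V x⟫_ℂ := by
    rw [ContinuousLinearMap.coe_coe, _root_.add_apply, inner_add_left, map_add,
      ContinuousLinearMap.star_eq_adjoint, ContinuousLinearMap.adjoint_inner_left, inner_re_symm]
    ring
  have hsq : ‖x - V x‖ ^ 2 ≤ (Θ * ‖x‖) ^ 2 := by
    have := hK.mul_norm_sq_le_re_inner_of_mem_iSup_eigenspace hxK
    rw [@norm_sub_sq ℂ, norm_map_of_mem_unitary hV]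
    linarith
  exact (pow_le_pow_iff_left₀ (norm_nonneg _) (by positivity) two_ne_zero).mp hsq

end Unitary

theorem Matrix.isStarProjection_mul_conjTranspose_self {m k R : Type*} [Fintype m] [Fintype k]
    [DecidableEq k] [Semiring R] [StarRing R] {A : Matrix m k R} (hA : Aᴴ * A = 1) :
    IsStarProjection (A * Aᴴ) where
  isIdempotentElem := by
    rw [IsIdempotentElem, Matrix.mul_assoc, ← Matrix.mul_assoc Aᴴ, hA, Matrix.one_mul]
  isSelfAdjoint := isHermitian_mul_conjTranspose_self A

theorem Matrix.two_smul_mul_conjTranspose_self_sub_one_mem_unitary {m k R : Type*} [Fintype m]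
    [DecidableEq m] [Fintype k] [DecidableEq k] [CommRing R] [StarRing R] {A : Matrix m k R}
    (hA : Aᴴ * A = 1) : (2 : R) • (A * Aᴴ) - 1 ∈ unitary (Matrix m m R) := by
  rw [two_smul, ← two_mul]
  exact (isStarProjection_mul_conjTranspose_self hA).two_mul_sub_one_mem_unitary

theorem Matrix.toEuclideanLin_mul_conjTranspose_self_apply_eq_zero {𝕜 m k : Type*} [RCLike 𝕜]
    [Fintype m] [DecidableEq m] [Fintype k] [DecidableEq k] {A : Matrix m k 𝕜}
    {u : EuclideanSpace 𝕜 m}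
    (hu : u ∈ (LinearMap.range (toEuclideanLin A))ᗮ) : toEuclideanLin (A * Aᴴ) u = 0 := by
  rw [LinearMap.orthogonal_range, LinearMap.mem_ker,
    ← toEuclideanLin_conjTranspose_eq_adjoint] at hu
  rw [toLpLin_mul_same, LinearMap.comp_apply, hu, map_zero]

/-- Effective Spectral Gap Lemma: Let `A`, `B` have orthonormal columns,
`U = (2BBᴴ − I)(2AAᴴ − I)`, and for `Θ ≥ 0` let `P_Θ` be the orthogonal projection onto
the span of the eigenvectors of `U` with eigenvalue `e^{iθ}`, `|θ| ≤ Θ`.  Then for every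
`u` orthogonal to the column space of `A`, `‖P_Θ Π_B u‖ ≤ (Θ/2) ‖u‖`. -/
theorem stmt_11 {n k m : ℕ} (A : Matrix (Fin n) (Fin k) ℂ) (B : Matrix (Fin n) (Fin m) ℂ)
    (hA : Aᴴ * A = 1) (hB : Bᴴ * B = 1) (Θ : ℝ) (hΘ : 0 ≤ Θ)
    (S : Submodule ℂ (EuclideanSpace ℂ (Fin n)))
    (hS : S = ⨆ θ ∈ {θ : ℝ | |θ| ≤ Θ},
      Module.End.eigenspace
        (Matrix.toEuclideanLin
          (((2 : ℂ) • (B * Bᴴ) - 1) * ((2 : ℂ) • (A * Aᴴ) - 1)))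
        (Complex.exp (θ * Complex.I)))
    (u : EuclideanSpace ℂ (Fin n))
    (hu : u ∈ (LinearMap.range (Matrix.toEuclideanLin A))ᗮ) :
    ‖(Submodule.orthogonalProjection S (Matrix.toEuclideanLin (B * Bᴴ) u) :
        EuclideanSpace ℂ (Fin n))‖ ≤ (Θ / 2) * ‖u‖ := by
  set V := toEuclideanCLM (n := Fin n) (𝕜 := ℂ)
    (((2 : ℂ) • (B * Bᴴ) - 1) * ((2 : ℂ) • (A * Aᴴ) - 1))
  have hV : V ∈ unitary _ := Unitary.map_mem _ <| mul_mem
    (two_smul_mul_conjTranspose_self_sub_one_mem_unitary hB)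
    (two_smul_mul_conjTranspose_self_sub_one_mem_unitary hA)
  have hVu : u - V u = (2 : ℂ) • toEuclideanLin (B * Bᴴ) u := by
    have hAu := toEuclideanLin_mul_conjTranspose_self_apply_eq_zero hu
    rw [← coe_toEuclideanCLM_eq_toEuclideanLin, ContinuousLinearMap.coe_coe] at hAu
    simp only [V, map_mul, map_sub, map_smul, map_one, mul_apply_eq_comp, _root_.sub_apply,
      _root_.smul_apply, one_apply_eq_self, hAu, smul_zero, zero_sub, map_neg]
    rw [sub_neg_eq_add, add_sub_cancel]
    rfl
  have hdisp : ∀ x ∈ S, ‖x - V x‖ ≤ Θ * ‖x‖ := fun x hx =>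
    V.norm_sub_apply_le_of_mem_iSup_eigenspace hV hΘ (hS ▸ hx)
  have := V.norm_starProjection_sub_apply_le hV S hΘ hdisp u
  rw [hVu, map_smul, norm_smul, Complex.norm_two] at this
  rw [Submodule.coe_orthogonalProjectionOnto_apply]
  linarith
end

section
/- For a connected graph G with m edges, and vertices s, t, the hitting time from s to t of the simple random walk is at most 2·m·R_{st}, where R_{st} is the effective resistance between s and t when each edge is a unit resistor. -/
/-- `f` is a unit flow from `s` to `t` in `G`: antisymmetric, supported on edges, with
zero net flow at every internal vertex and unit net flow out of `s`. -/
def IsUnitFlow {V : Type*} [Fintype V] (G : SimpleGraph V) (s t : V)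
    (f : V → V → ℝ) : Prop :=
  (∀ u v, f u v = -f v u) ∧
  (∀ u v, f u v ≠ 0 → G.Adj u v) ∧
  (∀ v, v ≠ s → v ≠ t → ∑ u, f v u = 0) ∧
  (∑ u, f s u = 1)

/-- The energy of a flow: the sum over edges of the square of the flow (each ordered
pair counted once). -/
noncomputable def flowEnergy {V : Type*} [Fintype V] (f : V → V → ℝ) : ℝ :=
  (∑ u, ∑ v, (f u v) ^ 2) / 2

/-!
Let `φ` solve the Poisson equation `L φ = 𝟙ₛ - 𝟙ₜ` for the Laplacian `L` of `G`; it exists because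
`G` is connected, so `ker L` is the constants and `range L` is the space of vectors summing to `0`.
For every unit flow `f` from `s` to `t`, summation by parts gives `⟪f, ∇φ⟫ = 2 (φ s - φ t)`; since
`∇φ` is itself a unit flow, expanding the energy of `f - ∇φ ≥ 0` gives Thomson's principle
`R_{st} = φ s - φ t`. The hitting times satisfy `L h = deg - 2m 𝟙ₜ`, so `g = h - 2m φ` has
`L g = deg > 0` off `s`; the minimum principle puts the minimum of `g` at `s`, whence
`h s - 2m φ s ≤ h t - 2m φ t`, i.e. `h s ≤ 2m (φ s - φ t)`.
-/

open Finset Matrix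

namespace SimpleGraph

variable {V : Type*} [Fintype V] [DecidableEq V] (G : SimpleGraph V) [DecidableRel G.Adj]

theorem sum_lapMatrix_mulVec (x : V → ℝ) : ∑ v, (G.lapMatrix ℝ *ᵥ x) v = 0 := by
  have h : (fun _ => 1) ᵥ* G.lapMatrix ℝ = 0 := by
    rw [← mulVec_transpose, (G.isSymm_lapMatrix ℝ).eq, lapMatrix_mulVec_const_eq_zero]
  simpa [dotProduct, h] using dotProduct_mulVec (fun _ => (1 : ℝ)) (G.lapMatrix ℝ) x

theorem card_connectedComponent_eq_one (hG : G.Connected) :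
    Fintype.card G.ConnectedComponent = 1 := by
  obtain ⟨v⟩ := hG.nonempty
  exact Fintype.card_eq_one_iff.mpr
    ⟨G.connectedComponentMk v, fun c => c.ind fun w => ConnectedComponent.eq.mpr (hG w v)⟩

theorem range_toLin'_lapMatrix (hG : G.Connected) :
    LinearMap.range (G.lapMatrix ℝ).toLin' = LinearMap.ker (∑ v : V, LinearMap.proj v) := by
  set σ := ∑ v : V, LinearMap.proj (R := ℝ) (φ := fun _ : V => ℝ) v
  have hσ : Function.Surjective σ := by
    obtain ⟨v⟩ := hG.nonempty
    exact fun c => ⟨Pi.single v c, by simp [σ]⟩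
  refine Submodule.eq_of_le_of_finrank_eq ?_ ?_
  · rintro _ ⟨x, rfl⟩
    simpa [σ] using G.sum_lapMatrix_mulVec x
  · have hL := LinearMap.finrank_range_add_finrank_ker (G.lapMatrix ℝ).toLin'
    have hσ' := LinearMap.finrank_range_add_finrank_ker σ
    rw [← card_connectedComponent_eq_finrank_ker_toLin'_lapMatrix,
      G.card_connectedComponent_eq_one hG] at hL
    rw [LinearMap.range_eq_top.mpr hσ, finrank_top, Module.finrank_self] at hσ'
    omega

theorem exists_lapMatrix_mulVec_eq (hG : G.Connected) {b : V → ℝ} (hb : ∑ v, b v = 0) :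
    ∃ φ, G.lapMatrix ℝ *ᵥ φ = b := by
  have hb' : b ∈ LinearMap.range (G.lapMatrix ℝ).toLin' := by
    rw [G.range_toLin'_lapMatrix hG]
    simpa using hb
  exact hb'

def gradFlow (φ : V → ℝ) (u v : V) : ℝ := if G.Adj u v then φ u - φ v else 0

theorem sum_gradFlow (φ : V → ℝ) (u : V) : ∑ v, G.gradFlow φ u v = (G.lapMatrix ℝ *ᵥ φ) u := by
  simp only [gradFlow]
  rw [lapMatrix_mulVec_apply, ← sum_filter, ← neighborFinset_eq_filter, sum_sub_distrib,
    sum_const, card_neighborFinset_eq_degree, nsmul_eq_mul]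

end SimpleGraph

theorem sum_sum_mul_sub_of_antisymm {V : Type*} [Fintype V] {f : V → V → ℝ}
    (hf : ∀ u v, f u v = -f v u) (y : V → ℝ) :
    ∑ u, ∑ v, f u v * (y u - y v) = 2 * ∑ u, y u * ∑ v, f u v := by
  have h : ∑ u, ∑ v, f u v * y v = -∑ u, y u * ∑ v, f u v := by
    rw [sum_comm, ← sum_neg_distrib]
    refine sum_congr rfl fun v _ => ?_
    rw [mul_sum, ← sum_neg_distrib]
    exact sum_congr rfl fun u _ => by rw [hf]; ring
  have h' : ∑ u, ∑ v, f u v * y u = ∑ u, y u * ∑ v, f u v :=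
    sum_congr rfl fun u _ => by rw [mul_sum]; exact sum_congr rfl fun v _ => mul_comm _ _
  simp only [mul_sub, sum_sub_distrib, h, h']
  ring

theorem sum_sum_eq_zero_of_antisymm {V : Type*} [Fintype V] {f : V → V → ℝ}
    (hf : ∀ u v, f u v = -f v u) : ∑ u, ∑ v, f u v = 0 := by
  simpa using sum_sum_mul_sub_of_antisymm hf (fun _ => 1)

namespace IsUnitFlow

variable {V : Type*} [Fintype V] {G : SimpleGraph V} {s t : V} {f : V → V → ℝ}

theorem ne (hf : IsUnitFlow G s t f) : s ≠ t := by
  rintro rfl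
  have h := sum_sum_eq_zero_of_antisymm hf.1
  rw [Fintype.sum_eq_single s fun v hv => hf.2.2.1 v hv hv, hf.2.2.2] at h
  exact one_ne_zero h

theorem sum_mul_sum_eq_sub (hf : IsUnitFlow G s t f) (y : V → ℝ) :
    ∑ u, y u * ∑ v, f u v = y s - y t := by
  have hsplit : ∀ y : V → ℝ, ∑ u, y u * ∑ v, f u v = y s + y t * ∑ v, f t v := fun y => by
    rw [Fintype.sum_eq_add s t hf.ne fun v hv => by rw [hf.2.2.1 v hv.1 hv.2, mul_zero],
      hf.2.2.2, mul_one]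
  have ht : ∑ v, f t v = -1 := by
    have h := hsplit 1
    simp only [Pi.one_apply, one_mul, sum_sum_eq_zero_of_antisymm hf.1] at h
    linarith
  rw [hsplit, ht]
  ring

variable [DecidableRel G.Adj]

theorem sum_sum_mul_gradFlow (hf : IsUnitFlow G s t f) (φ : V → ℝ) :
    ∑ u, ∑ v, f u v * G.gradFlow φ u v = 2 * (φ s - φ t) := by
  have hsupp : ∀ u v, f u v * G.gradFlow φ u v = f u v * (φ u - φ v) := by
    intro u v
    by_cases huv : G.Adj u v
    · simp [SimpleGraph.gradFlow, huv]
    · simp [SimpleGraph.gradFlow, huv, not_imp_comm.mp (hf.2.1 u v) huv]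
  simp only [hsupp, sum_sum_mul_sub_of_antisymm hf.1, hf.sum_mul_sum_eq_sub]

end IsUnitFlow

namespace SimpleGraph

variable {V : Type*} [Fintype V] [DecidableEq V] {G : SimpleGraph V} [DecidableRel G.Adj]
  {s t : V} {φ : V → ℝ}

theorem isUnitFlow_gradFlow (hst : s ≠ t)
    (hφ : G.lapMatrix ℝ *ᵥ φ = Pi.single s 1 - Pi.single t 1) :
    IsUnitFlow G s t (G.gradFlow φ) := by
  refine ⟨fun u v => ?_, fun u v huv => ?_, fun v hs ht => ?_, ?_⟩
  · simp only [gradFlow, G.adj_comm v u]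
    split_ifs <;> ring
  · by_contra h
    simp [gradFlow, h] at huv
  · simp [sum_gradFlow, hφ, hs, ht]
  · simp [sum_gradFlow, hφ, hst]

theorem flowEnergy_gradFlow (hst : s ≠ t)
    (hφ : G.lapMatrix ℝ *ᵥ φ = Pi.single s 1 - Pi.single t 1) :
    flowEnergy (G.gradFlow φ) = φ s - φ t := by
  have h := (isUnitFlow_gradFlow hst hφ).sum_sum_mul_gradFlow φ
  simp only [← sq] at h
  rw [flowEnergy, h]
  ring

theorem _root_.IsUnitFlow.le_flowEnergy {f : V → V → ℝ} (hf : IsUnitFlow G s t f)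
    (hφ : G.lapMatrix ℝ *ᵥ φ = Pi.single s 1 - Pi.single t 1) :
    φ s - φ t ≤ flowEnergy f := by
  have hnonneg : 0 ≤ ∑ u, ∑ v, (f u v - G.gradFlow φ u v) ^ 2 := by positivity
  have hexpand : ∑ u, ∑ v, (f u v - G.gradFlow φ u v) ^ 2 = 2 * flowEnergy f
      - 2 * ∑ u, ∑ v, f u v * G.gradFlow φ u v + 2 * flowEnergy (G.gradFlow φ) := by
    simp only [flowEnergy, sub_sq, sum_add_distrib, sum_sub_distrib, mul_assoc, ← mul_sum]
    ring
  rw [hf.sum_sum_mul_gradFlow, flowEnergy_gradFlow hf.ne hφ] at hexpand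
  linarith

theorem isLeast_flowEnergy (hst : s ≠ t)
    (hφ : G.lapMatrix ℝ *ᵥ φ = Pi.single s 1 - Pi.single t 1) :
    IsLeast {E | ∃ f, IsUnitFlow G s t f ∧ E = flowEnergy f} (φ s - φ t) :=
  ⟨⟨_, isUnitFlow_gradFlow hst hφ, (flowEnergy_gradFlow hst hφ).symm⟩,
    by rintro _ ⟨f, hf, rfl⟩; exact hf.le_flowEnergy hφ⟩

variable (G) in
theorem le_of_lapMatrix_mulVec_pos {g : V → ℝ} (hg : ∀ v, v ≠ s → 0 < (G.lapMatrix ℝ *ᵥ g) v)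
    (v : V) : g s ≤ g v := by
  have : Nonempty V := ⟨v⟩
  obtain ⟨w, hw⟩ := Finite.exists_min g
  suffices w = s from this ▸ hw v
  by_contra hws
  have hle : (G.degree w : ℝ) * g w ≤ ∑ u ∈ G.neighborFinset w, g u := by
    rw [← card_neighborFinset_eq_degree, ← nsmul_eq_mul, ← sum_const]
    exact sum_le_sum fun u _ => hw u
  have := hg w hws
  rw [lapMatrix_mulVec_apply] at this
  linarith

section HittingTime

variable {h : V → ℝ}
  (hrec : ∀ v, v ≠ t → h v = 1 + (∑ u ∈ G.neighborFinset v, h u) / G.degree v)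
include hrec

theorem lapMatrix_mulVec_apply_of_ne_target {v : V} (hv : v ≠ t) :
    (G.lapMatrix ℝ *ᵥ h) v = G.degree v := by
  rw [lapMatrix_mulVec_apply]
  rcases eq_or_ne (G.degree v) 0 with h0 | h0
  · have : G.neighborFinset v = ∅ := by
      rwa [← card_eq_zero, card_neighborFinset_eq_degree]
    simp [h0, this]
  · rw [hrec v hv]
    field_simp
    ring

theorem lapMatrix_mulVec_apply_target :
    (G.lapMatrix ℝ *ᵥ h) t = G.degree t - 2 * #G.edgeFinset := by
  have hdeg : ∑ v, (G.degree v : ℝ) = 2 * #G.edgeFinset := by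
    exact_mod_cast G.sum_degrees_eq_twice_card_edges
  have hsum := Fintype.sum_eq_single (f := fun v => (G.lapMatrix ℝ *ᵥ h) v - G.degree v) t
    fun v hv => by rw [lapMatrix_mulVec_apply_of_ne_target hrec hv, sub_self]
  rw [sum_sub_distrib, G.sum_lapMatrix_mulVec, hdeg] at hsum
  linarith

theorem hitting_le_two_mul_card_edgeFinset_mul (hG : G.Connected) (hst : s ≠ t) (hht : h t = 0)
    (hφ : G.lapMatrix ℝ *ᵥ φ = Pi.single s 1 - Pi.single t 1) :
    h s ≤ 2 * #G.edgeFinset * (φ s - φ t) := by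
  have : Nontrivial V := ⟨s, t, hst⟩
  have hpos : ∀ v, v ≠ s → 0 < (G.lapMatrix ℝ *ᵥ (h - (2 * #G.edgeFinset : ℝ) • φ)) v := by
    intro v hvs
    have hdeg : (0 : ℝ) < G.degree v := by
      exact_mod_cast hG.preconnected.degree_pos_of_nontrivial v
    rw [mulVec_sub, mulVec_smul, hφ]
    rcases eq_or_ne v t with rfl | hvt
    · simp [lapMatrix_mulVec_apply_target hrec, hst, hdeg]
    · simp [lapMatrix_mulVec_apply_of_ne_target hrec hvt, hvs, hvt, hdeg]
  have := G.le_of_lapMatrix_mulVec_pos hpos t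
  simp only [Pi.sub_apply, Pi.smul_apply, smul_eq_mul, hht] at this
  linarith

end HittingTime

end SimpleGraph

open SimpleGraph in
/-- For a connected graph `G` with `m` edges and vertices `s`, `t`, the
hitting time from `s` to `t` of the simple random walk (the function `h` with `h t = 0`
and `h v = 1 + (1/deg v) Σ_{u ∼ v} h u` for `v ≠ t`) is at most `2 m R_{st}`, where
`R_{st}` is the effective resistance: the least energy of a unit flow from `s` to `t`. -/
theorem stmt_19 {V : Type*} [Fintype V] [DecidableEq V]
    (G : SimpleGraph V) [DecidableRel G.Adj] (hG : G.Connected) (s t : V)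
    (h : V → ℝ) (hht : h t = 0)
    (hrec : ∀ v, v ≠ t →
      h v = 1 + (∑ u ∈ G.neighborFinset v, h u) / (G.degree v)) :
    h s ≤ 2 * (G.edgeFinset.card : ℝ) *
      sInf {E : ℝ | ∃ f, IsUnitFlow G s t f ∧ E = flowEnergy f} := by
  rcases eq_or_ne s t with rfl | hst
  · have hempty : {E : ℝ | ∃ f, IsUnitFlow G s s f ∧ E = flowEnergy f} = ∅ :=
      Set.eq_empty_of_forall_notMem fun _ ⟨_, hf, _⟩ => hf.ne rfl
    rw [hempty, Real.sInf_empty, mul_zero, hht]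
  obtain ⟨φ, hφ⟩ := G.exists_lapMatrix_mulVec_eq hG (b := Pi.single s 1 - Pi.single t 1)
    (by simp [sum_sub_distrib])
  rw [(isLeast_flowEnergy hst hφ).csInf_eq]
  exact hitting_le_two_mul_card_edgeFinset_mul hrec hG hst hht hφ
end
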